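/- arXiv:2008.01862 — 9 statements merged into one kernel-verified Lean document; each statement's English description precedes it below -/
import Mathlib

section
/- Let L ⊂ ℝⁿ be a full-rank lattice with basis matrix A whose rows are a₁,…,aₙ. Suppose I ⊂ {1,…,n} is a subset of n−k distinct indices (1 ≤ k < n) such that d_I(A) := Σ_{i∈I} d(aᵢ) < n. Then there exist ℓ := n − d_I(A) linearly independent vectors x₁,…,x_ℓ ∈ L each having at most k nonzero coordinates; in particular s_ℓ(L) ≤ k. -/
/-- The rational dimension of a vector. -/
noncomputable def ratDim {n : ℕ} (x : Fin n → ℝ) : ℕ :=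
  Module.finrank ℚ (Submodule.span ℚ (Set.range x))

/-- The lattice `A ℤⁿ`, i.e. the ℤ-span of the columns of `A`. -/
def lat {n : ℕ} (A : Matrix (Fin n) (Fin n) ℝ) : Submodule ℤ (Fin n → ℝ) :=
  Submodule.span ℤ (Set.range A.transpose)

/-!
A rational vector `v` is orthogonal to the row `aᵢ` exactly when it lies in the kernel of the
`ℚ`-linear map `ℚⁿ → ℝ`, `v ↦ ⟪v, aᵢ⟫`, whose image is `span_ℚ {aᵢ₁, …, aᵢₙ}`; so this kernel
has codimension `d(aᵢ)`, and the rational vectors orthogonal to all rows `aᵢ`, `i ∈ I`, form a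
space of dimension at least `ℓ = n - d_I(A)`. Clearing denominators gives `ℓ` independent integer
vectors `z` there, and the lattice vectors `A z` vanish on the `n - k` coordinates in `I`.
-/

open Module Matrix

theorem finrank_le_finrank_biInf_add_sum {K V ι : Type*} [DivisionRing K] [AddCommGroup V]
    [Module K V] [FiniteDimensional K V] (p : ι → Submodule K V) (c : ι → ℕ)
    (hc : ∀ i, finrank K V ≤ finrank K (p i) + c i) (S : Finset ι) :
    finrank K V ≤ finrank K ↥(⨅ i ∈ S, p i) + ∑ i ∈ S, c i := by
  classical
  induction S using Finset.induction_on with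
  | empty => exact (finrank_top K V).symm.le.trans (Submodule.finrank_mono (by simp))
  | insert a S ha ih =>
    rw [Finset.iInf_insert, Finset.sum_insert ha]
    have hsup_inf := Submodule.finrank_sup_add_finrank_inf_eq (p a) (⨅ i ∈ S, p i)
    have hsup := Submodule.finrank_le (p a ⊔ ⨅ i ∈ S, p i)
    have := hc a
    omega

theorem finrank_ker_linearCombination_add_ratDim {n : ℕ} (a : Fin n → ℝ) :
    finrank ℚ (LinearMap.ker (Fintype.linearCombination ℚ a)) + ratDim a =
      finrank ℚ (Fin n → ℚ) := by
  rw [ratDim, ← Fintype.range_linearCombination, add_comm]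
  exact LinearMap.finrank_range_add_finrank_ker _

theorem exists_intCast_eq_smul {ι : Type*} [Finite ι] (v : ι → ℚ) :
    ∃ c : ℚ, c ≠ 0 ∧ ∃ z : ι → ℤ, (fun m => (z m : ℚ)) = c • v := by
  obtain ⟨b, hb⟩ := IsLocalization.exist_integer_multiples_of_finite (nonZeroDivisors ℤ) v
  choose z hz using hb
  refine ⟨b, by exact_mod_cast nonZeroDivisors.coe_ne_zero b, z, funext fun m => ?_⟩
  simpa using hz m

theorem Submodule.exists_linearIndependent_intCast_mem {ι : Type*} [Finite ι]
    (K : Submodule ℚ (ι → ℚ)) {l : ℕ} (hl : l ≤ finrank ℚ K) :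
    ∃ z : Fin l → ι → ℤ, LinearIndependent ℤ z ∧ ∀ j, (fun m => (z j m : ℚ)) ∈ K := by
  obtain ⟨u, hu⟩ := exists_linearIndependent_of_le_finrank hl
  choose c hc z hz using fun j => exists_intCast_eq_smul (u j : ι → ℚ)
  refine ⟨z, ?_, fun j => hz j ▸ K.smul_mem _ (u j).2⟩
  have hcu := (hu.map' K.subtype K.ker_subtype).units_smul fun j => Units.mk0 (c j) (hc j)
  have hzu : (fun j => algebraMap ℤ ℚ ∘ z j) = (fun j => Units.mk0 (c j) (hc j)) • K.subtype ∘ u :=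
    funext fun j => hz j
  rw [← hzu] at hcu
  exact linearIndependent_algebraMap_comp_iff.mp hcu

theorem mulVec_intCast_mem_lat {n : ℕ} (A : Matrix (Fin n) (Fin n) ℝ) (z : Fin n → ℤ) :
    A *ᵥ (fun m => (z m : ℝ)) ∈ lat A := by
  rw [mulVec_eq_sum]
  refine Submodule.sum_mem _ fun m _ => ?_
  have : MulOpposite.op (z m : ℝ) • A.transpose m = z m • A.transpose m := by
    ext; simp [mul_comm]
  exact this ▸ Submodule.smul_mem _ _ (Submodule.subset_span ⟨m, rfl⟩)

theorem linearIndependent_mulVec_intCast {ι m : Type*} [Fintype m] [DecidableEq m]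
    (A : Matrix m m ℝ) (hA : IsUnit A.det) (z : ι → m → ℤ) (hz : LinearIndependent ℤ z) :
    LinearIndependent ℝ (fun j => A *ᵥ fun i => (z j i : ℝ)) := by
  have hAinj : LinearMap.ker A.mulVecLin = ⊥ :=
    LinearMap.ker_eq_bot.mpr (mulVec_injective_iff_isUnit.mpr ((isUnit_iff_isUnit_det A).mpr hA))
  have hzR : LinearIndependent ℝ (fun j => algebraMap ℤ ℝ ∘ z j) :=
    linearIndependent_algebraMap_comp_iff.mpr hz
  exact hzR.map' A.mulVecLin hAinj

theorem mulVec_intCast_apply {m : Type*} [Fintype m] (A : Matrix m m ℝ) (z : m → ℤ) (i : m) :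
    (A *ᵥ fun j => (z j : ℝ)) i = Fintype.linearCombination ℚ (A i) (fun j => (z j : ℚ)) := by
  simp [mulVec, dotProduct, Fintype.linearCombination_apply, Rat.smul_def, mul_comm]

theorem card_filter_ne_zero_le_of_eq_zero {ι M : Type*} [Fintype ι] [DecidableEq ι] [Zero M]
    [DecidableEq M]
    (x : ι → M) (I : Finset ι) (hx : ∀ i ∈ I, x i = 0) :
    (Finset.univ.filter fun i => x i ≠ 0).card ≤ Fintype.card ι - I.card := by
  rw [← Finset.card_compl]
  exact Finset.card_le_card fun i hi => Finset.mem_compl.mpr fun hiI =>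
    (Finset.mem_filter.mp hi).2 (hx i hiI)

theorem stmt1_general {n k : ℕ}
    (A : Matrix (Fin n) (Fin n) ℝ) (hA : IsUnit A.det)
    (I : Finset (Fin n)) (hI : I.card = n - k) :
    ∃ x : Fin (n - ∑ i ∈ I, ratDim (A i)) → Fin n → ℝ,
      LinearIndependent ℝ x ∧ (∀ j, x j ∈ lat A) ∧
        ∀ j, (Finset.univ.filter fun i => x j i ≠ 0).card ≤ k := by
  classical
  let K : Submodule ℚ (Fin n → ℚ) := ⨅ i ∈ I, LinearMap.ker (Fintype.linearCombination ℚ (A i))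
  have hK : n - ∑ i ∈ I, ratDim (A i) ≤ finrank ℚ K := by
    have := finrank_le_finrank_biInf_add_sum _ (fun i => ratDim (A i))
      (fun i => (finrank_ker_linearCombination_add_ratDim (A i)).symm.le) I
    rw [finrank_fin_fun] at this
    exact Nat.sub_le_of_le_add this
  obtain ⟨z, hz, hzK⟩ := K.exists_linearIndependent_intCast_mem hK
  refine ⟨fun j => A *ᵥ fun m => (z j m : ℝ), linearIndependent_mulVec_intCast A hA z hz,
    fun j => mulVec_intCast_mem_lat A (z j), fun j => ?_⟩
  have hzero : ∀ i ∈ I, (A *ᵥ fun m => (z j m : ℝ)) i = 0 := fun i hi => by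
    rw [mulVec_intCast_apply]
    exact (Submodule.mem_iInf _).mp ((Submodule.mem_iInf _).mp (hzK j) i) hi
  exact (card_filter_ne_zero_le_of_eq_zero _ I hzero).trans (by rw [Fintype.card_fin]; omega)

theorem stmt1 {n k : ℕ} (hk1 : 1 ≤ k) (hkn : k < n)
    (A : Matrix (Fin n) (Fin n) ℝ) (hA : IsUnit A.det)
    (I : Finset (Fin n)) (hI : I.card = n - k)
    (hdI : ∑ i ∈ I, ratDim (A i) < n) :
    ∃ x : Fin (n - ∑ i ∈ I, ratDim (A i)) → Fin n → ℝ,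
      LinearIndependent ℝ x ∧ (∀ j, x j ∈ lat A) ∧
        ∀ j, (Finset.univ.filter fun i => x j i ≠ 0).card ≤ k :=
  stmt1_general A hA I hI
end

section
/- Let L ⊂ ℝⁿ be a full-rank lattice. Then the following are equivalent: (1) d(L) = n, i.e. every row of some (equivalently any) basis matrix of L has rational dimension 1; (2) L contains n linearly independent vectors each of which is a nonzero scalar multiple of a standard basis vector (equivalently s₁(L) = ⋯ = sₙ(L) = 1). -/
/-!
Let `V` be the `ℚ`-span of the columns of `A`; it has `ℚ`-dimension at most `n`. Since the `k`-th
entry of row `i` is the `i`-th coordinate of column `k`, the `ℚ`-span of the entries of row `i` is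
the image of `V` under the `i`-th coordinate projection.

If row `i` spans the line `ℚ cᵢ`, then `V` lies in the `ℚ`-span of the `n` vectors `cᵢ eᵢ`. The
columns are `ℝ`-independent, hence `ℚ`-independent, so a dimension count makes this an equality;
clearing denominators then puts a nonzero integer multiple of every `cᵢ eᵢ` into the lattice.

Conversely, independent lattice vectors `c_l e_{j l}` force `j` to be a bijection, and the same
dimension count shows that they span `V` over `ℚ`. The `i`-th coordinates of these vectors are
`c_l` for the unique `l` with `j l = i` and `0` otherwise, so row `i` spans a line.
-/

open Module Submodule Set

theorem Submodule.exists_eq_span_singleton_of_finrank_eq_one {K V : Type*} [DivisionRing K]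
    [AddCommGroup V] [Module K V] {p : Submodule K V} (h : finrank K p = 1) :
    ∃ c ≠ 0, p = K ∙ c := by
  obtain ⟨v, hv, hspan⟩ := finrank_eq_one_iff'.mp h
  refine ⟨v, by simpa using hv, le_antisymm (fun w hw => ?_) ?_⟩
  · obtain ⟨a, ha⟩ := hspan ⟨w, hw⟩
    exact mem_span_singleton.mpr ⟨a, congrArg Subtype.val ha⟩
  · exact (span_singleton_le_iff_mem _ _).mpr v.2

theorem Submodule.exists_zsmul_mem_span_int_of_mem_span_rat {E : Type*} [AddCommGroup E]
    [Module ℚ E] {s : Set E} {x : E} (hx : x ∈ span ℚ s) :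
    ∃ z : ℤ, z ≠ 0 ∧ z • x ∈ span ℤ s := by
  obtain ⟨y, hy, z, rfl⟩ := (IsLocalization.mem_span_iff (nonZeroDivisors ℤ) (S := ℚ)).mp hx
  refine ⟨z, nonZeroDivisors.coe_ne_zero z, ?_⟩
  convert hy using 1
  rw [← Int.cast_smul_eq_zsmul ℚ, smul_smul, ← eq_intCast (algebraMap ℤ ℚ),
    IsLocalization.mk'_spec', map_one, one_smul]

theorem span_range_eq_of_linearIndependent_of_le {K E ι κ : Type*} [Field K] [AddCommGroup E]
    [Module K E] [Fintype ι] [Fintype κ] {v : ι → E} {w : κ → E} (hv : LinearIndependent K v)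
    (hcard : Fintype.card κ ≤ Fintype.card ι) (hle : span K (range v) ≤ span K (range w)) :
    span K (range v) = span K (range w) :=
  have := FiniteDimensional.span_of_finite K (finite_range w)
  eq_of_le_of_finrank_le hle <|
    (finrank_range_le_card w).trans <| hcard.trans (finrank_span_eq_card hv).ge

theorem mem_span_range_smul_single {R S ι : Type*} [CommSemiring R] [Semiring S] [Algebra R S]
    [Fintype ι] [DecidableEq ι] {v c : ι → S} (h : ∀ i, v i ∈ R ∙ c i) :
    v ∈ span R (range fun i => c i • (Pi.single i 1 : ι → S)) := by
  rw [← Finset.univ_sum_single v]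
  refine sum_mem fun i _ => ?_
  obtain ⟨r, hr⟩ := mem_span_singleton.mp (h i)
  rw [← hr, Pi.single_smul']
  exact smul_mem _ r (subset_span ⟨i, by simp only [← Pi.single_smul', smul_eq_mul, mul_one]⟩)

theorem span_range_single {R M ι : Type*} [Semiring R] [AddCommMonoid M] [Module R M]
    [DecidableEq ι] (i : ι) (a : M) : span R (range (Pi.single i a)) = R ∙ a := by
  refine le_antisymm (span_le.mpr ?_)
    ((span_singleton_le_iff_mem _ _).mpr (subset_span ⟨i, by simp⟩))
  rintro _ ⟨j, rfl⟩
  rcases eq_or_ne j i with rfl | hj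
  · simp [mem_span_singleton_self]
  · simp [Pi.single_eq_of_ne hj]

theorem injective_of_linearIndependent_smul_single {K ι κ : Type*} [Field K] [DecidableEq κ]
    {c : ι → K} {j : ι → κ} (hc : ∀ i, c i ≠ 0)
    (hind : LinearIndependent K fun i => c i • (Pi.single (j i) 1 : κ → K)) :
    Function.Injective j := by
  have := (LinearIndependent.units_smul_iff (fun i => (Pi.single (j i) 1 : κ → K))
    (fun i => Units.mk0 (c i) (hc i))).mp hind
  exact Function.Injective.of_comp (f := fun k => (Pi.single k 1 : κ → K)) this.injective

theorem span_range_eval_eq_map_proj {R M ι κ : Type*} [Semiring R] [AddCommMonoid M] [Module R M]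
    (v : ι → κ → M) (i : κ) :
    span R (range fun k => v k i) = (span R (range v)).map (LinearMap.proj i) := by
  rw [map_span, ← range_comp]
  rfl

theorem exists_linearIndependent_smul_single_mem_lat {n : ℕ} (A : Matrix (Fin n) (Fin n) ℝ)
    (hA : IsUnit A.det) (hrow : ∀ i, ratDim (A i) = 1) :
    ∃ x : Fin n → Fin n → ℝ, LinearIndependent ℝ x ∧
      ∀ i, x i ∈ lat A ∧ ∃ (c : ℝ) (j : Fin n), c ≠ 0 ∧ x i = c • (Pi.single j 1 : Fin n → ℝ) := by
  choose c hc hspan using fun i => exists_eq_span_singleton_of_finrank_eq_one (hrow i)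
  set w : Fin n → Fin n → ℝ := fun i => c i • Pi.single i 1
  have hcols : LinearIndependent ℚ A.transpose :=
    (Matrix.linearIndependent_cols_iff_isUnit.mpr
      ((Matrix.isUnit_iff_isUnit_det A).mpr hA)).restrict_scalars' ℚ
  have hle : span ℚ (range A.transpose) ≤ span ℚ (range w) := by
    refine span_le.mpr (range_subset_iff.mpr fun k => mem_span_range_smul_single fun i => ?_)
    exact hspan i ▸ subset_span ⟨k, rfl⟩
  have heq := span_range_eq_of_linearIndependent_of_le hcols le_rfl hle
  have hw : ∀ k, w k ∈ span ℚ (range A.transpose) := fun k => heq ▸ subset_span (mem_range_self k)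
  choose z hz hzw using fun k => exists_zsmul_mem_span_int_of_mem_span_rat (hw k)
  have hzc : ∀ k, (z k : ℝ) * c k ≠ 0 := fun k => mul_ne_zero (Int.cast_ne_zero.mpr (hz k)) (hc k)
  have hzw_eq : (fun k => z k • w k) = fun k => ((z k : ℝ) * c k) • Pi.single k 1 := by
    funext k
    simp only [w, ← Int.cast_smul_eq_zsmul ℝ, smul_smul]
  refine ⟨fun k => z k • w k, ?_, fun k => ⟨hzw k, _, k, hzc k, congrFun hzw_eq k⟩⟩
  rw [hzw_eq]
  convert (Pi.basisFun ℝ (Fin n)).linearIndependent.units_smul fun k => Units.mk0 _ (hzc k) using 1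
  funext k
  simp [Units.smul_def]

theorem ratDim_eq_one_of_smul_single_mem_lat {n : ℕ} (A : Matrix (Fin n) (Fin n) ℝ)
    {x : Fin n → Fin n → ℝ} (hx : LinearIndependent ℝ x) (hmem : ∀ l, x l ∈ lat A)
    {c : Fin n → ℝ} {j : Fin n → Fin n} (hc : ∀ l, c l ≠ 0)
    (hxe : ∀ l, x l = c l • (Pi.single (j l) 1 : Fin n → ℝ)) (i : Fin n) : ratDim (A i) = 1 := by
  have hj := injective_of_linearIndependent_smul_single hc (funext hxe ▸ hx)
  obtain ⟨l₀, rfl⟩ := Finite.injective_iff_surjective.mp hj i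
  have hle : span ℚ (range x) ≤ span ℚ (range A.transpose) :=
    span_le.mpr (range_subset_iff.mpr fun l => span_le_restrictScalars ℤ ℚ _ (hmem l))
  have heq := span_range_eq_of_linearIndependent_of_le (hx.restrict_scalars' ℚ) le_rfl hle
  have hcoord : (fun l => x l (j l₀)) = Pi.single l₀ (c l₀) := by
    funext l
    rw [hxe]
    rcases eq_or_ne l l₀ with rfl | hl
    · simp
    · simp [hl, hj.ne hl]
  change finrank ℚ (span ℚ (range fun k => A.transpose k (j l₀))) = 1
  rw [span_range_eval_eq_map_proj A.transpose, ← heq, ← span_range_eval_eq_map_proj,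
    hcoord, span_range_single, finrank_span_singleton (hc l₀)]

theorem stmt4 {n : ℕ} (A : Matrix (Fin n) (Fin n) ℝ) (hA : IsUnit A.det) :
    (∀ i, ratDim (A i) = 1) ↔
      ∃ x : Fin n → Fin n → ℝ, LinearIndependent ℝ x ∧
        ∀ i, x i ∈ lat A ∧
          ∃ (c : ℝ) (j : Fin n), c ≠ 0 ∧ x i = c • (Pi.single j 1 : Fin n → ℝ) := by
  refine ⟨exists_linearIndependent_smul_single_mem_lat A hA, ?_⟩
  rintro ⟨x, hx, hprop⟩
  choose hmem c j hc hxe using hprop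
  exact ratDim_eq_one_of_smul_single_mem_lat A hx hmem hc hxe
end

section
/- Let A ∈ GL_n(ℝ) have each row aᵢ of the form aᵢ = αᵢ fᵢ with αᵢ ∈ ℝ \ {0} and fᵢ ∈ ℤⁿ primitive, and let L = A·ℤⁿ. Then L contains a rectangular full-rank sublattice M spanned by n nonzero scalar multiples of the standard basis vectors, with index [L : M] = (det(L) / ∏ᵢ|αᵢ|)^{n−1}. Explicitly, M = B·ℤⁿ where B = det(F)·𝒜, F is the integer matrix with rows fᵢ, and 𝒜 = diag(α₁,…,αₙ). -/
/-- The index of a sublattice `M` inside `L`. -/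
noncomputable def idx {n : ℕ} (M L : Submodule ℤ (Fin n → ℝ)) : ℕ :=
  AddSubgroup.relIndex M.toAddSubgroup L.toAddSubgroup

/-!
Write `A = diag(α) F`. Then `B = det(F) diag(α) = diag(α) F adj(F) = A adj(F)`, so the columns
of `B` are integral combinations of those of `A`, i.e. `M ≤ L`. The index of one full-rank lattice
in another is the ratio of their covolumes, here
`|det B| / |det A| = |det F|ⁿ |∏ αᵢ| / (|det F| |∏ αᵢ|) = |det F|ⁿ⁻¹`,
while `|det A| / ∏ |αᵢ| = |det F|`.
-/

open Matrix Module Submodule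

theorem ZLattice.covolume_span_eq_abs_det {ι : Type*} [Fintype ι] [DecidableEq ι]
    (b : Basis ι ℝ (ι → ℝ)) :
    ZLattice.covolume (span ℤ (Set.range b)) = |(Matrix.of b).det| := by
  rw [ZLattice.covolume_eq_det _ (b.restrictScalars ℤ)]
  congr 3
  ext i j
  simp

theorem relIndex_span_eq_abs_det_div {ι : Type*} [Fintype ι] [DecidableEq ι]
    (b₁ b₂ : Basis ι ℝ (ι → ℝ)) (h : span ℤ (Set.range b₁) ≤ span ℤ (Set.range b₂)) :
    ((span ℤ (Set.range b₁)).toAddSubgroup.relIndex (span ℤ (Set.range b₂)).toAddSubgroup : ℝ) =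
      |(Matrix.of b₁).det| / |(Matrix.of b₂).det| := by
  rw [← ZLattice.covolume_div_covolume_eq_relIndex _ _ h, ZLattice.covolume_span_eq_abs_det,
    ZLattice.covolume_span_eq_abs_det]

noncomputable def Matrix.colBasis {n : ℕ} (A : Matrix (Fin n) (Fin n) ℝ) (hA : A.det ≠ 0) :
    Basis (Fin n) ℝ (Fin n → ℝ) :=
  basisOfLinearIndependentOfCardEqFinrank' A.col (linearIndependent_cols_of_det_ne_zero hA)
    (by simp)

theorem Matrix.coe_colBasis {n : ℕ} (A : Matrix (Fin n) (Fin n) ℝ) (hA : A.det ≠ 0) :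
    ⇑(A.colBasis hA) = A.col :=
  coe_basisOfLinearIndependentOfCardEqFinrank' ..

theorem lat_eq_span_colBasis {n : ℕ} (A : Matrix (Fin n) (Fin n) ℝ) (hA : A.det ≠ 0) :
    lat A = span ℤ (Set.range (A.colBasis hA)) := by
  rw [coe_colBasis]
  rfl

theorem idx_lat_eq_abs_det_div {n : ℕ} {A B : Matrix (Fin n) (Fin n) ℝ} (hA : A.det ≠ 0)
    (hB : B.det ≠ 0) (h : lat B ≤ lat A) : (idx (lat B) (lat A) : ℝ) = |B.det| / |A.det| := by
  rw [lat_eq_span_colBasis A hA, lat_eq_span_colBasis B hB] at h ⊢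
  rw [idx, relIndex_span_eq_abs_det_div _ _ h, coe_colBasis, coe_colBasis,
    show of B.col = Bᵀ from rfl, show of A.col = Aᵀ from rfl, det_transpose, det_transpose]

theorem lat_mul_intCast_le {n : ℕ} (A : Matrix (Fin n) (Fin n) ℝ)
    (N : Matrix (Fin n) (Fin n) ℤ) : lat (A * N.map (↑)) ≤ lat A := by
  refine span_le.mpr ?_
  rintro _ ⟨j, rfl⟩
  have hcol : (A * N.map (↑))ᵀ j = ∑ k, N k j • Aᵀ k := by
    ext i
    simp [Matrix.mul_apply, Finset.sum_apply, zsmul_eq_mul, mul_comm]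
  rw [hcol]
  exact sum_mem fun k _ => smul_mem _ _ (subset_span ⟨k, rfl⟩)

theorem Matrix.diagonal_mul_mul_adjugate {ι R : Type*} [Fintype ι] [DecidableEq ι] [CommRing R]
    (α : ι → R) (M : Matrix ι ι R) :
    diagonal α * M * M.adjugate = diagonal fun i => M.det * α i := by
  rw [Matrix.mul_assoc, mul_adjugate, mul_smul_comm, Matrix.mul_one, ← diagonal_smul]
  rfl

theorem stmt6_general {n : ℕ} (α : Fin n → ℝ)
    (F : Matrix (Fin n) (Fin n) ℤ)
    (A : Matrix (Fin n) (Fin n) ℝ) (hAdef : ∀ i j, A i j = α i * (F i j : ℝ))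
    (hA : IsUnit A.det) :
    lat (Matrix.diagonal fun i => (F.det : ℝ) * α i) ≤ lat A ∧
      (idx (lat (Matrix.diagonal fun i => (F.det : ℝ) * α i)) (lat A) : ℝ) =
        (|A.det| / ∏ i, |α i|) ^ (n - 1) := by
  have hAeq : A = diagonal α * F.map (↑) := by ext i j; simp [hAdef]
  have hdetA : A.det = (∏ i, α i) * F.det := by rw [hAeq, det_mul, det_diagonal, Int.cast_det]
  have hB : diagonal (fun i => (F.det : ℝ) * α i) = A * F.adjugate.map (↑) := by
    have hadj : F.adjugate.map ((↑) : ℤ → ℝ) = (F.map (↑)).adjugate :=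
      (Int.castRingHom ℝ).map_adjugate F
    rw [hAeq, hadj, diagonal_mul_mul_adjugate, Int.cast_det]
  have hdetB : (diagonal fun i => (F.det : ℝ) * α i).det = F.det ^ n * ∏ i, α i := by
    rw [det_diagonal, Finset.prod_mul_distrib, Finset.prod_const, Finset.card_fin]
  have hle : lat (diagonal fun i => (F.det : ℝ) * α i) ≤ lat A :=
    hB ▸ lat_mul_intCast_le A F.adjugate
  refine ⟨hle, ?_⟩
  obtain ⟨hα, hF⟩ := mul_ne_zero_iff.mp (hdetA ▸ hA.ne_zero)
  rw [idx_lat_eq_abs_det_div hA.ne_zero (by rw [hdetB]; positivity) hle, hdetB, hdetA,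
    ← Finset.abs_prod]
  rcases n with _ | m
  · simp
  · rw [Nat.add_sub_cancel, abs_mul, abs_mul, abs_pow]
    field_simp
    ring

theorem stmt6 {n : ℕ} (α : Fin n → ℝ) (hα : ∀ i, α i ≠ 0)
    (F : Matrix (Fin n) (Fin n) ℤ) (hF : ∀ i, Finset.univ.gcd (F i) = 1)
    (A : Matrix (Fin n) (Fin n) ℝ) (hAdef : ∀ i j, A i j = α i * (F i j : ℝ))
    (hA : IsUnit A.det) :
    lat (Matrix.diagonal fun i => (F.det : ℝ) * α i) ≤ lat A ∧
      (idx (lat (Matrix.diagonal fun i => (F.det : ℝ) * α i)) (lat A) : ℝ) =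
        (|A.det| / ∏ i, |α i|) ^ (n - 1) :=
  stmt6_general α F A hAdef hA
end

section
/- For an integer d > 1, let L = A·ℤⁿ where A is the matrix with rows e₁, e₂, …, e_{n−1}, and (1,1,…,1,d). Then any full-rank sublattice M of L that has a basis consisting of vectors each with exactly one nonzero coordinate satisfies [L : M] ≥ d^{n−1}, and the sublattice (dℤ)ⁿ achieves this index. -/
open Submodule Module Matrix

theorem Pi.exists_eq_single_of_existsUnique_ne_zero {ι M : Type*} [DecidableEq ι] [Zero M]
    {x : ι → M} (hx : ∃! j, x j ≠ 0) : ∃ j, x = Pi.single j (x j) := by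
  obtain ⟨j, -, hj⟩ := hx
  refine ⟨j, funext fun k => ?_⟩
  by_cases hk : k = j
  · subst hk
    simp
  · simp only [Pi.single_apply, hk, if_false]
    by_contra h
    exact hk (hj k h)

theorem LinearIndependent.exists_basis_coe_eq {ι K : Type*} [Fintype ι] [Field K]
    {v : ι → ι → K} (hv : LinearIndependent K v) : ∃ b : Basis ι K (ι → K), ⇑b = v :=
  ⟨_, coe_basisOfLinearIndependentOfCardEqFinrank' v hv (finrank_fintype_fun_eq_card K).symm⟩

theorem Pi.linearIndependent_smul_single {ι K : Type*} [DecidableEq ι] [Field K] {c : K}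
    (hc : c ≠ 0) : LinearIndependent K fun i => c • (Pi.single i 1 : ι → K) :=
  (Pi.linearIndependent_single_one ι K).units_smul fun _ => Units.mk0 c hc

theorem Matrix.det_of_smul_single {ι R : Type*} [Fintype ι] [DecidableEq ι] [CommRing R]
    (c : R) : (Matrix.of fun i => c • (Pi.single i 1 : ι → R)).det = c ^ Fintype.card ι := by
  have : (Matrix.of fun i => c • (Pi.single i 1 : ι → R)) = Matrix.diagonal fun _ => c := by
    ext i j
    simp [Matrix.diagonal_apply, Pi.single_apply, eq_comm]
  rw [this, det_diagonal, Finset.prod_const, Finset.card_univ]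

namespace ZLattice

variable {ι : Type*} [Fintype ι] [DecidableEq ι]

theorem covolume_span_eq_abs_det_s8 (b : Basis ι ℝ (ι → ℝ)) :
    covolume (span ℤ (Set.range b)) = |(Matrix.of b).det| := by
  rw [covolume_eq_det _ (b.restrictScalars ℤ)]
  congr 3
  ext i
  simp [Basis.restrictScalars_apply]

theorem relIndex_span_eq_abs_det_div {v w : ι → ι → ℝ}
    (hv : LinearIndependent ℝ v) (hw : LinearIndependent ℝ w)
    (h : span ℤ (Set.range v) ≤ span ℤ (Set.range w)) :
    ((span ℤ (Set.range v)).toAddSubgroup.relIndex (span ℤ (Set.range w)).toAddSubgroup : ℝ) =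
      |(Matrix.of v).det| / |(Matrix.of w).det| := by
  obtain ⟨bv, rfl⟩ := hv.exists_basis_coe_eq
  obtain ⟨bw, rfl⟩ := hw.exists_basis_coe_eq
  rw [← covolume_div_covolume_eq_relIndex _ _ h, covolume_span_eq_abs_det_s8,
    covolume_span_eq_abs_det_s8]

theorem relIndex_span_ne_zero {v w : ι → ι → ℝ}
    (hv : LinearIndependent ℝ v) (hw : LinearIndependent ℝ w)
    (h : span ℤ (Set.range v) ≤ span ℤ (Set.range w)) :
    (span ℤ (Set.range v)).toAddSubgroup.relIndex (span ℤ (Set.range w)).toAddSubgroup ≠ 0 := by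
  have hdet {u : ι → ι → ℝ} (hu : LinearIndependent ℝ u) : (Matrix.of u).det ≠ 0 :=
    ((isUnit_iff_isUnit_det _).1 (linearIndependent_rows_iff_isUnit.1 hu)).ne_zero
  have := relIndex_span_eq_abs_det_div hv hw h
  exact_mod_cast this ▸ div_ne_zero (abs_ne_zero.2 (hdet hv)) (abs_ne_zero.2 (hdet hw))

end ZLattice

/-- The matrix `A` of the statement, with `n = m + 1`. -/
def identityWithLastRow (m d : ℕ) : Matrix (Fin (m + 1)) (Fin (m + 1)) ℝ :=
  Matrix.of fun i j => if i = Fin.last m then (if j = Fin.last m then (d : ℝ) else 1)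
    else if i = j then 1 else 0

namespace identityWithLastRow

variable {m d : ℕ}

theorem det : (identityWithLastRow m d).det = d := by
  rw [Matrix.det_of_isLowerTriangular]
  · simp [identityWithLastRow]
  · intro i j (hij : i < j)
    have : i ≠ Fin.last m := (hij.trans_le (Fin.le_last j)).ne
    simp [identityWithLastRow, this, hij.ne]

theorem linearIndependent_transpose (hd : d ≠ 0) :
    LinearIndependent ℝ (identityWithLastRow m d)ᵀ :=
  linearIndependent_rows_of_det_ne_zero (by rw [det_transpose, det]; exact_mod_cast hd)

theorem transpose_last :
    (identityWithLastRow m d)ᵀ (Fin.last m) = (d : ℝ) • Pi.single (Fin.last m) 1 := by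
  ext i
  by_cases hi : i = Fin.last m <;> simp [identityWithLastRow, hi]

theorem transpose_of_ne_last {j : Fin (m + 1)} (hj : j ≠ Fin.last m) :
    (identityWithLastRow m d)ᵀ j = Pi.single j 1 + Pi.single (Fin.last m) 1 := by
  ext i
  by_cases hi : i = Fin.last m <;> simp [identityWithLastRow, Pi.single_apply, hi, hj, eq_comm]

theorem smul_single_mem_lat (j : Fin (m + 1)) :
    (d : ℝ) • Pi.single j 1 ∈ lat (identityWithLastRow m d) := by
  have hcol (k : Fin (m + 1)) : (identityWithLastRow m d)ᵀ k ∈ lat (identityWithLastRow m d) :=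
    subset_span ⟨k, rfl⟩
  by_cases hj : j = Fin.last m
  · subst hj
    rw [← transpose_last]
    exact hcol _
  · have : (d : ℝ) • Pi.single j 1 = (d : ℝ) • (identityWithLastRow m d)ᵀ j -
        (identityWithLastRow m d)ᵀ (Fin.last m) := by
      rw [transpose_of_ne_last hj, transpose_last, smul_add, add_sub_cancel_right]
    rw [this, Nat.cast_smul_eq_nsmul]
    exact sub_mem (nsmul_mem (hcol j) d) (hcol _)

theorem span_smul_single_le_lat :
    span ℤ (Set.range fun i => (d : ℝ) • (Pi.single i 1 : Fin (m + 1) → ℝ)) ≤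
      lat (identityWithLastRow m d) :=
  span_le.2 (Set.range_subset_iff.2 smul_single_mem_lat)

theorem mem_zmultiples_of_mem_lat {x : Fin (m + 1) → ℝ}
    (hx : x ∈ lat (identityWithLastRow m d)) :
    2 * x (Fin.last m) - ∑ i, x i ∈ AddSubgroup.zmultiples (d : ℝ) := by
  induction hx using Submodule.span_induction with
  | mem x hx =>
    obtain ⟨j, rfl⟩ := hx
    by_cases hj : j = Fin.last m
    · subst hj
      rw [transpose_last]
      simp [Pi.single_apply, two_mul]
    · rw [transpose_of_ne_last hj]
      simp [Finset.sum_add_distrib, Pi.single_apply, hj]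
      norm_num
  | zero => simp
  | add x y _ _ hx hy =>
    convert add_mem hx hy using 1
    simp only [Pi.add_apply, Finset.sum_add_distrib]
    ring
  | smul c x _ hx =>
    convert zsmul_mem hx c using 1
    simp only [Pi.smul_apply, zsmul_eq_mul, ← Finset.mul_sum]
    ring

theorem single_mem_span_smul_single_of_mem_lat {k : Fin (m + 1)} {t : ℝ}
    (ht : Pi.single k t ∈ lat (identityWithLastRow m d)) :
    Pi.single k t ∈ span ℤ (Set.range fun i => (d : ℝ) • (Pi.single i 1 : Fin (m + 1) → ℝ)) := by
  have hdvd : t ∈ AddSubgroup.zmultiples (d : ℝ) := by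
    have := mem_zmultiples_of_mem_lat ht
    by_cases hk : k = Fin.last m
    · subst hk
      simpa [two_mul] using this
    · simpa [Pi.single_apply, Ne.symm hk] using this
  obtain ⟨z, rfl⟩ := hdvd
  have : Pi.single k (z • (d : ℝ)) = z • ((d : ℝ) • (Pi.single k 1 : Fin (m + 1) → ℝ)) := by
    ext j
    by_cases hj : j = k <;> simp [hj]
  rw [this]
  exact zsmul_mem (subset_span (Set.mem_range_self k)) z

theorem idx_span_smul_single_lat (hd : d ≠ 0) :
    idx (span ℤ (Set.range fun i => (d : ℝ) • (Pi.single i 1 : Fin (m + 1) → ℝ)))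
      (lat (identityWithLastRow m d)) = d ^ m := by
  have hd' : (d : ℝ) ≠ 0 := Nat.cast_ne_zero.2 hd
  have hdetD := Matrix.det_of_smul_single (ι := Fin (m + 1)) (d : ℝ)
  have := ZLattice.relIndex_span_eq_abs_det_div (Pi.linearIndependent_smul_single hd')
    (linearIndependent_transpose hd) (span_smul_single_le_lat (m := m))
  rw [hdetD, show Matrix.of (identityWithLastRow m d)ᵀ = (identityWithLastRow m d)ᵀ from rfl,
    det_transpose, det, Fintype.card_fin, abs_pow, pow_succ, mul_div_cancel_right₀ _
      (abs_ne_zero.2 hd'), Nat.abs_cast] at this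
  exact_mod_cast this

theorem pow_le_idx_of_existsUnique_ne_zero (hd : d ≠ 0) {b : Fin (m + 1) → Fin (m + 1) → ℝ}
    (hb : LinearIndependent ℝ b) (hsingle : ∀ i, ∃! j, b i j ≠ 0)
    (hbL : span ℤ (Set.range b) ≤ lat (identityWithLastRow m d)) :
    d ^ m ≤ idx (span ℤ (Set.range b)) (lat (identityWithLastRow m d)) := by
  have hbD : span ℤ (Set.range b) ≤
      span ℤ (Set.range fun i => (d : ℝ) • (Pi.single i 1 : Fin (m + 1) → ℝ)) := by
    refine span_le.2 (Set.range_subset_iff.2 fun i => ?_)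
    obtain ⟨k, hk⟩ := Pi.exists_eq_single_of_existsUnique_ne_zero (hsingle i)
    have hbi : b i ∈ lat (identityWithLastRow m d) := hbL (subset_span ⟨i, rfl⟩)
    rw [hk] at hbi ⊢
    exact single_mem_span_smul_single_of_mem_lat hbi
  rw [← idx_span_smul_single_lat hd]
  exact AddSubgroup.relIndex_le_of_le_left ((toAddSubgroup_le _ _).2 hbD)
    (ZLattice.relIndex_span_ne_zero hb (linearIndependent_transpose hd) hbL)

end identityWithLastRow

theorem stmt8 {n : ℕ} (hn : 2 ≤ n) (d : ℕ) (hd : 1 < d)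
    (A : Matrix (Fin n) (Fin n) ℝ)
    (hAdef : ∀ i j, A i j =
      if (i : ℕ) = n - 1 then (if (j : ℕ) = n - 1 then (d : ℝ) else 1)
      else (if i = j then 1 else 0)) :
    (∀ M : Submodule ℤ (Fin n → ℝ), M ≤ lat A →
        (∃ b : Fin n → Fin n → ℝ, LinearIndependent ℝ b ∧
          M = Submodule.span ℤ (Set.range b) ∧ ∀ i, ∃! j, b i j ≠ 0) →
        d ^ (n - 1) ≤ idx M (lat A)) ∧
      Submodule.span ℤ
          (Set.range fun i : Fin n => (d : ℝ) • (Pi.single i 1 : Fin n → ℝ)) ≤ lat A ∧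
      idx (Submodule.span ℤ
          (Set.range fun i : Fin n => (d : ℝ) • (Pi.single i 1 : Fin n → ℝ))) (lat A) =
        d ^ (n - 1) := by
  obtain ⟨m, rfl⟩ : ∃ m, n = m + 1 := ⟨n - 1, by omega⟩
  obtain rfl : A = identityWithLastRow m d := by
    ext i j
    simp [hAdef, identityWithLastRow, Fin.ext_iff]
  have hd0 : d ≠ 0 := by omega
  rw [Nat.add_sub_cancel]
  refine ⟨?_, identityWithLastRow.span_smul_single_le_lat,
    identityWithLastRow.idx_span_smul_single_lat hd0⟩
  rintro _ hML ⟨b, hb, rfl, hsingle⟩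
  exact identityWithLastRow.pow_le_idx_of_existsUnique_ne_zero hd0 hb hsingle hML
end

section
/- Let τ = a + bi with b > 0, and suppose there exists t ∈ ℝ \ {0} with a − bt ∈ ℚ and a + b/t ∈ ℚ. Then the lattice Γ_τ = span_ℤ{(1,0),(a,b)} ⊂ ℝ² is virtually rectangular: with U_t = (1/√(1+t²))·[[1, −t],[t, 1]] (a rotation), the lattice U_t Γ_τ is spanned by (1/√(1+t²))·(1, t) and (1/√(1+t²))·(a−bt, at+b), each row of the corresponding basis matrix has rational dimension 1, and hence U_t Γ_τ contains a finite-index rectangular sublattice. -/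
/-- A full-rank lattice is rectangular if it has a basis of pairwise
orthogonal (nonzero, linearly independent) vectors. -/
def IsRectangular {n : ℕ} (M : Submodule ℤ (Fin n → ℝ)) : Prop :=
  ∃ b : Fin n → Fin n → ℝ, LinearIndependent ℝ b ∧
    (∀ i j, i ≠ j → ∑ k, b i k * b j k = 0) ∧
    M = Submodule.span ℤ (Set.range b)

/-- A lattice is virtually rectangular if it contains a rectangular sublattice
of finite index. -/
def VirtuallyRectangular {n : ℕ} (L : Submodule ℤ (Fin n → ℝ)) : Prop :=
  ∃ M : Submodule ℤ (Fin n → ℝ), M ≤ L ∧ IsRectangular M ∧ idx M L ≠ 0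

/-!
Proof idea: the rotation `U_t` sends the basis `(1, 0), (a, b)` to `c (1, t)` and
`c (r₁, r₂ t)`, where `c = (1 + t²)^(-1/2)`, `r₁ = a - b t` and `r₂ = a + b / t` are rational.
So the rotated lattice is `diag(c, c t)` applied to a lattice spanned by rational vectors, and
`r₁ ≠ r₂` makes that rational lattice commensurable with `ℤ²`; hence the rotated lattice is
commensurable with the rectangular lattice spanned by multiples of `(c, 0)` and `(0, c t)`.
-/

open Submodule Matrix

theorem AddSubgroup.relIndex_ne_zero_of_zsmul_mem {G : Type*} [AddCommGroup G]
    {H K : AddSubgroup G} [AddGroup.FG K] {N : ℤ} (hN : N ≠ 0)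
    (h : ∀ x ∈ K, N • x ∈ H) : H.relIndex K ≠ 0 := by
  have : Finite (K ⧸ H.addSubgroupOf K) := by
    refine AddCommGroup.finite_of_fg_isAddTorsion _ fun g => ?_
    induction g using QuotientAddGroup.induction_on with
    | H x =>
      refine isOfFinAddOrder_iff_zsmul_eq_zero.mpr ⟨N, hN, ?_⟩
      rw [← QuotientAddGroup.mk_zsmul, QuotientAddGroup.eq_zero_iff,
        AddSubgroup.mem_addSubgroupOf]
      exact h x x.2
  exact AddSubgroup.index_ne_zero_of_finite

theorem Rat.exists_common_denom {K : Type*} [Field K] [CharZero K] (q₁ q₂ : ℚ) :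
    ∃ D : ℤ, D ≠ 0 ∧ ∃ z₁ z₂ : ℤ, (z₁ : K) = D * q₁ ∧ (z₂ : K) = D * q₂ := by
  have hnum (q : ℚ) : (q.num : K) = q * q.den := by exact_mod_cast (Rat.mul_den_eq_num q).symm
  refine ⟨q₁.den * q₂.den, by positivity, q₁.num * q₂.den, q₂.num * q₁.den, ?_, ?_⟩ <;>
  · push_cast [hnum]
    ring

theorem sub_mul_ne_add_div {K : Type*} [Field K] [LinearOrder K] [IsStrictOrderedRing K]
    {a b t : K} (hb : b ≠ 0) (ht : t ≠ 0) : a - b * t ≠ a + b / t := by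
  intro h
  have : b * (t ^ 2 + 1) = 0 := by
    field_simp at h
    linear_combination -h
  exact hb (by simpa [(by positivity : t ^ 2 + 1 ≠ 0)] using this)

theorem Matrix.map_mulVecLin_span_pair {R m n : Type*} [CommRing R] [Fintype n]
    (A : Matrix m n R) (u v : n → R) :
    Submodule.map (A.mulVecLin.restrictScalars ℤ) (span ℤ {u, v}) =
      span ℤ {A *ᵥ u, A *ᵥ v} := by
  rw [map_span, Set.image_pair]
  rfl

theorem ratDim_eq_one {n : ℕ} {x : Fin n → ℝ} (hx : x ≠ 0) (s : ℝ)
    (h : ∀ i, ∃ q : ℚ, x i = q * s) : ratDim x = 1 := by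
  obtain ⟨i, hi⟩ := Function.ne_iff.mp hx
  obtain ⟨qi, hqi⟩ := h i
  have hs : s ≠ 0 := by rintro rfl; simp_all
  have hqi0 : qi ≠ 0 := by rintro rfl; simp_all
  have hspan : span ℚ (Set.range x) = ℚ ∙ s := by
    refine le_antisymm (span_le.mpr <| Set.range_subset_iff.mpr fun j => ?_) ?_
    · obtain ⟨q, hq⟩ := h j
      exact mem_span_singleton.mpr ⟨q, by rw [hq, Rat.smul_def]⟩
    · refine span_singleton_le_iff_mem _ _ |>.mpr ?_
      have : s = qi⁻¹ • x i := by
        rw [hqi, Rat.smul_def, Rat.cast_inv, ← mul_assoc, inv_mul_cancel₀ (by exact_mod_cast hqi0),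
          one_mul]
      rw [this]
      exact smul_mem _ _ (subset_span (Set.mem_range_self i))
  rw [ratDim, hspan, finrank_span_singleton hs]

theorem isRectangular_span_single {n : ℕ} {d : Fin n → ℝ} (hd : ∀ i, d i ≠ 0) :
    IsRectangular (span ℤ (Set.range fun i => Pi.single i (d i))) := by
  refine ⟨_, Pi.linearIndependent_single_of_ne_zero hd, fun i j hij => ?_, rfl⟩
  refine Finset.sum_eq_zero fun k _ => ?_
  by_cases hki : k = i
  · subst hki; simp [hij]
  · simp [hki]

theorem isRectangular_span_axes {x y : ℝ} (hx : x ≠ 0) (hy : y ≠ 0) :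
    IsRectangular (span ℤ {![x, 0], ![0, y]}) := by
  have h : (fun i => Pi.single i (![x, y] i)) = ![![x, 0], ![0, y]] := by
    ext i j; fin_cases i <;> fin_cases j <;> simp
  have := isRectangular_span_single (d := ![x, y]) (by simp [Fin.forall_fin_two, hx, hy])
  rwa [h, Matrix.range_cons_cons_empty] at this

theorem virtuallyRectangular_of_zsmul_mem {n : ℕ} {L M : Submodule ℤ (Fin n → ℝ)} (hL : L.FG)
    (hML : M ≤ L) (hM : IsRectangular M) {N : ℤ} (hN : N ≠ 0) (h : ∀ x ∈ L, N • x ∈ M) :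
    VirtuallyRectangular L := by
  have : AddGroup.FG L.toAddSubgroup :=
    (AddGroup.fg_iff_addSubgroup_fg _).mpr ((fg_iff_addSubgroup_fg L).mp hL)
  exact ⟨M, hML, hM, AddSubgroup.relIndex_ne_zero_of_zsmul_mem hN h⟩

theorem virtuallyRectangular_span_pair {x y : ℝ} (hx : x ≠ 0) (hy : y ≠ 0) {q₁ q₂ : ℚ}
    (hq : q₁ ≠ q₂) :
    VirtuallyRectangular (span ℤ {![x, y], ![q₁ * x, q₂ * y]}) := by
  -- With `D` a common denominator and `m = D (q₂ - q₁)`, the lattice spanned by `(m x, 0)` and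
  -- `(0, m y)` lies in `L` and contains `(D m) • L`.
  obtain ⟨D, hD, z₁, z₂, hz₁, hz₂⟩ := Rat.exists_common_denom (K := ℝ) q₁ q₂
  set m : ℤ := z₂ - z₁
  have hm : (m : ℝ) = D * (q₂ - q₁) := by push_cast [m, hz₁, hz₂]; ring
  have hm0 : m ≠ 0 := by
    rw [← Int.cast_ne_zero (α := ℝ), hm]
    exact mul_ne_zero (by exact_mod_cast hD) (sub_ne_zero.mpr (by exact_mod_cast hq.symm))
  have hmR : (m : ℝ) ≠ 0 := by exact_mod_cast hm0
  refine virtuallyRectangular_of_zsmul_mem (fg_span (Set.toFinite _)) ?_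
    (isRectangular_span_axes (mul_ne_zero hmR hx) (mul_ne_zero hmR hy)) (mul_ne_zero hD hm0) ?_
  · refine span_le.mpr (Set.insert_subset_iff.mpr ⟨?_, Set.singleton_subset_iff.mpr ?_⟩)
    · refine mem_span_pair.mpr ⟨z₂, -D, ?_⟩
      ext i; fin_cases i <;> simp [zsmul_eq_mul]
      · linear_combination x * hz₂ - x * hm
      · linear_combination y * hz₂
    · refine mem_span_pair.mpr ⟨-z₁, D, ?_⟩
      ext i; fin_cases i <;> simp [zsmul_eq_mul]
      · linear_combination -x * hz₁
      · linear_combination -y * hz₁ - y * hm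
  · suffices h : span ℤ {![x, y], ![q₁ * x, q₂ * y]} ≤
        (span ℤ _).comap ((D * m) • LinearMap.id) from fun v hv => h hv
    refine span_le.mpr (Set.insert_subset_iff.mpr ⟨?_, Set.singleton_subset_iff.mpr ?_⟩)
    · refine mem_span_pair.mpr ⟨D, D, ?_⟩
      ext i; fin_cases i <;> simp [zsmul_eq_mul]
    · refine mem_span_pair.mpr ⟨z₁, z₂, ?_⟩
      ext i; fin_cases i <;> simp [zsmul_eq_mul]
      · linear_combination x * m * hz₁
      · linear_combination y * m * hz₂

theorem stmt10 (a b t : ℝ) (hb : 0 < b) (ht : t ≠ 0)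
    (h1 : ∃ r : ℚ, a - b * t = (r : ℝ)) (h2 : ∃ r : ℚ, a + b / t = (r : ℝ)) :
    (Submodule.map
        ((((Real.sqrt (1 + t ^ 2))⁻¹ •
            Matrix.of ![![(1 : ℝ), -t], ![t, 1]]).mulVecLin).restrictScalars ℤ)
        (Submodule.span ℤ ({![(1 : ℝ), 0], ![a, b]} : Set (Fin 2 → ℝ))) =
      Submodule.span ℤ
        ({(Real.sqrt (1 + t ^ 2))⁻¹ • ![(1 : ℝ), t],
          (Real.sqrt (1 + t ^ 2))⁻¹ • ![a - b * t, a * t + b]} : Set (Fin 2 → ℝ))) ∧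
    ratDim ((Real.sqrt (1 + t ^ 2))⁻¹ • ![(1 : ℝ), a - b * t]) = 1 ∧
    ratDim ((Real.sqrt (1 + t ^ 2))⁻¹ • ![t, a * t + b]) = 1 ∧
    VirtuallyRectangular
      (Submodule.map
        ((((Real.sqrt (1 + t ^ 2))⁻¹ •
            Matrix.of ![![(1 : ℝ), -t], ![t, 1]]).mulVecLin).restrictScalars ℤ)
        (Submodule.span ℤ ({![(1 : ℝ), 0], ![a, b]} : Set (Fin 2 → ℝ)))) := by
  obtain ⟨r₁, hr₁⟩ := h1
  obtain ⟨r₂, hr₂⟩ := h2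
  set c := (Real.sqrt (1 + t ^ 2))⁻¹
  have hc : c ≠ 0 := inv_ne_zero (Real.sqrt_pos.mpr (by positivity)).ne'
  have hct : c * t ≠ 0 := mul_ne_zero hc ht
  have hr₂t : a * t + b = r₂ * t := by rw [← hr₂]; field_simp
  have hr : r₁ ≠ r₂ := fun h =>
    sub_mul_ne_add_div (a := a) hb.ne' ht (by rw [hr₁, hr₂, h])
  have hw₁ : c • ![(1 : ℝ), t] = ![c, c * t] := by ext i; fin_cases i <;> simp
  have hw₂ : c • ![a - b * t, a * t + b] = ![r₁ * c, r₂ * (c * t)] := by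
    ext i; fin_cases i <;> simp [hr₁, hr₂t] <;> ring
  have himage :
      Submodule.map ((c • Matrix.of ![![(1 : ℝ), -t], ![t, 1]]).mulVecLin.restrictScalars ℤ)
        (span ℤ {![1, 0], ![a, b]}) = span ℤ {c • ![1, t], c • ![a - b * t, a * t + b]} := by
    rw [Matrix.map_mulVecLin_span_pair]
    congr 3 <;> ext i <;> fin_cases i <;> simp [mulVec, dotProduct, Fin.sum_univ_two] <;> ring
  refine ⟨himage, ratDim_eq_one (by simp [hc]) c ?_,
    ratDim_eq_one (by simp [hct]) (c * t) ?_, ?_⟩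
  · exact Fin.forall_fin_two.mpr ⟨⟨1, by simp⟩, ⟨r₁, by simp [hr₁, mul_comm]⟩⟩
  · exact Fin.forall_fin_two.mpr ⟨⟨1, by simp⟩, ⟨r₂, by simp [hr₂t]; ring⟩⟩
  · rw [himage, hw₁, hw₂]
    exact virtuallyRectangular_span_pair hc hct hr
end

section
/- Let τ = a + bi with b > 0, a ∉ ℚ, and suppose t ∈ ℝ \ {0} satisfies a − bt = u/v and a + b/t = q/w for integers u, q and positive integers v, w (fractions in lowest terms). Then the lattice Γ_τ = span_ℤ{(1,0),(a,b)} contains a rectangular sublattice Γ' of index [Γ_τ : Γ'] = |b|·v·w·(t²+1)/|t|. -/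
/-!
Write `e₁ = (1, 0)`, `e₂ = (a, b)`. The hypotheses say exactly that the lattice vectors
`-u e₁ + v e₂ = v b (t, 1)` and `-q e₁ + w e₂ = w b (-1/t, 1)` are orthogonal, so they span a
rectangular sublattice. Its index is the absolute value of the determinant
`v q - u w = v w b (t² + 1) / t` of the integer matrix expressing them in the basis `e₁, e₂`.
-/

open Module Submodule Set

section IntegerCombinations

variable {ι E : Type*} [AddCommGroup E]

/-- `AddSubgroup.relIndex_eq_natAbs_det` wants bases of `S.toAddSubgroup.toIntSubmodule`, whose
`ℤ`-module instance does not unify with that of `S` at instance transparency. -/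
noncomputable def Module.Basis.toAddSubgroupToIntSubmodule {S : Submodule ℤ E}
    (b : Basis ι ℤ S) : Basis ι ℤ S.toAddSubgroup.toIntSubmodule :=
  b.map (LinearEquiv.ofEq _ _ (toAddSubgroup_toIntSubmodule S).symm)

variable [Fintype ι]

theorem span_sum_smul_le_span (e : ι → E) (A : Matrix ι ι ℤ) :
    span ℤ (range fun i ↦ ∑ j, A i j • e j) ≤ span ℤ (range e) :=
  span_le.mpr <| range_subset_iff.mpr fun _ ↦
    sum_mem fun j _ ↦ smul_mem _ _ (subset_span (mem_range_self j))

variable [DecidableEq ι]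

theorem LinearIndependent.sum_smul_of_det_ne_zero {R : Type*} [CommRing R] [IsDomain R]
    [Module R E] {e : ι → E} (he : LinearIndependent R e) {A : Matrix ι ι R} (hA : A.det ≠ 0) :
    LinearIndependent R fun i ↦ ∑ j, A i j • e j := by
  simpa [Function.comp_def, Fintype.linearCombination_apply] using
    (Matrix.linearIndependent_rows_of_det_ne_zero hA).map' (Fintype.linearCombination R e)
      (LinearMap.ker_eq_bot.mpr he.fintypeLinearCombination_injective)

theorem relIndex_span_sum_smul_eq_natAbs_det {e : ι → E} (he : LinearIndependent ℤ e)
    {A : Matrix ι ι ℤ} (hA : A.det ≠ 0) :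
    (span ℤ (range fun i ↦ ∑ j, A i j • e j)).toAddSubgroup.relIndex
      (span ℤ (range e)).toAddSubgroup = A.det.natAbs := by
  rw [AddSubgroup.relIndex_eq_natAbs_det _ _ (span_sum_smul_le_span e A)
    (Basis.span (he.sum_smul_of_det_ne_zero hA)).toAddSubgroupToIntSubmodule
    (Basis.span he).toAddSubgroupToIntSubmodule, Basis.det_apply, ← Matrix.det_transpose]
  congr 2
  ext i j
  rw [Matrix.transpose_apply, Basis.toMatrix_apply]
  simp only [Basis.toAddSubgroupToIntSubmodule, Basis.map_apply, Basis.map_repr,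
    LinearEquiv.trans_apply]
  rw [show (LinearEquiv.ofEq _ _ _).symm _ = ∑ k, A i k • Basis.span he k from
    Subtype.ext (by simp; rfl), Basis.repr_sum_self]

end IntegerCombinations

theorem linearIndependent_of_ne_zero_of_dotProduct_eq_zero {ι κ : Type*} [Fintype κ]
    {v : ι → κ → ℝ} (hz : ∀ i, v i ≠ 0) (ho : Pairwise fun i j ↦ ∑ k, v i k * v j k = 0) :
    LinearIndependent ℝ v :=
  (linearIndependent_of_ne_zero_of_inner_eq_zero (𝕜 := ℝ) (v := fun i ↦ WithLp.toLp 2 (v i))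
    (fun i ↦ by simpa using hz i)
    (fun i j hij ↦ by simpa [PiLp.inner_apply, mul_comm] using ho hij)).map'
      (WithLp.linearEquiv 2 ℝ (κ → ℝ)).toLinearMap (LinearEquiv.ker _)

theorem isRectangular_span_of_ne_zero_of_dotProduct_eq_zero {n : ℕ} {v : Fin n → Fin n → ℝ}
    (hz : ∀ i, v i ≠ 0) (ho : ∀ i j, i ≠ j → ∑ k, v i k * v j k = 0) :
    IsRectangular (span ℤ (range v)) :=
  ⟨v, linearIndependent_of_ne_zero_of_dotProduct_eq_zero hz fun i j ↦ ho i j, ho, rfl⟩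

theorem isRectangular_span_pair {c d s : ℝ} (hc : c ≠ 0) (hd : d ≠ 0) (hs : s ≠ 0) :
    IsRectangular (span ℤ (range ![![c * s, c], ![-d / s, d]])) := by
  refine isRectangular_span_of_ne_zero_of_dotProduct_eq_zero (fun i ↦ ?_) (fun i j hij ↦ ?_)
  · fin_cases i <;> simp [hc, hd]
  · fin_cases i <;> fin_cases j <;> simp [Fin.sum_univ_two] at hij ⊢ <;> field_simp <;> ring

theorem stmt11_general (a b t : ℝ) (hb : 0 < b) (ht : t ≠ 0)
    (u q : ℤ) (v w : ℕ) (hv : 0 < v) (hw : 0 < w)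
    (huv : a - b * t = (u : ℝ) / (v : ℝ)) (hqw : a + b / t = (q : ℝ) / (w : ℝ)) :
    ∃ Γ' : Submodule ℤ (Fin 2 → ℝ),
      Γ' ≤ Submodule.span ℤ ({![(1 : ℝ), 0], ![a, b]} : Set (Fin 2 → ℝ)) ∧
      IsRectangular Γ' ∧
      (idx Γ' (Submodule.span ℤ ({![(1 : ℝ), 0], ![a, b]} : Set (Fin 2 → ℝ))) : ℝ) =
        |b| * (v : ℝ) * (w : ℝ) * (t ^ 2 + 1) / |t| := by
  set e := ![![(1 : ℝ), 0], ![a, b]]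
  set A : Matrix (Fin 2) (Fin 2) ℤ := !![-u, v; -q, w]
  have hvR : (0 : ℝ) < v := Nat.cast_pos.mpr hv
  have hwR : (0 : ℝ) < w := Nat.cast_pos.mpr hw
  have hu : (u : ℝ) = v * (a - b * t) := by rw [huv]; field_simp
  have hq : (q : ℝ) = w * (a + b / t) := by rw [hqw]; field_simp
  have hdet : (A.det : ℝ) = v * w * b * (t ^ 2 + 1) / t := by
    rw [Matrix.det_fin_two_of]; push_cast; rw [hu, hq]; field_simp; ring
  have hA : A.det ≠ 0 := by
    rw [← Int.cast_ne_zero (α := ℝ), hdet]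
    exact div_ne_zero (by positivity) ht
  have hf : (fun i ↦ ∑ j, A i j • e j) = ![![v * b * t, v * b], ![-(w * b) / t, w * b]] := by
    ext i k
    fin_cases i <;> fin_cases k <;> simp [A, e, Fin.sum_univ_two, hu, hq] <;> field_simp <;> ring
  have he : LinearIndependent ℤ e :=
    .restrict_scalars' ℤ (Matrix.linearIndependent_rows_of_det_ne_zero (A := .of e)
      (by simp [e, Matrix.det_fin_two, hb.ne']))
  have hΓ : range e = {![(1 : ℝ), 0], ![a, b]} := Matrix.range_cons_cons_empty _ _ _
  refine ⟨span ℤ (range fun i ↦ ∑ j, A i j • e j), hΓ ▸ span_sum_smul_le_span e A, ?_, ?_⟩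
  · rw [hf]
    exact isRectangular_span_pair (by positivity) (by positivity) ht
  · rw [idx, ← hΓ, relIndex_span_sum_smul_eq_natAbs_det he hA, Nat.cast_natAbs, Int.cast_abs,
      hdet, abs_div, abs_mul, abs_mul, abs_mul, abs_of_pos hvR, abs_of_pos hwR,
      abs_of_pos (by positivity : (0 : ℝ) < t ^ 2 + 1)]
    ring

theorem stmt11 (a b t : ℝ) (hb : 0 < b) (hirr : ∀ r : ℚ, a ≠ (r : ℝ))
    (ht : t ≠ 0) (u q : ℤ) (v w : ℕ) (hv : 0 < v) (hw : 0 < w)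
    (huv : a - b * t = (u : ℝ) / (v : ℝ)) (hqw : a + b / t = (q : ℝ) / (w : ℝ))
    (huvcop : Int.gcd u (v : ℤ) = 1) (hqwcop : Int.gcd q (w : ℤ) = 1) :
    ∃ Γ' : Submodule ℤ (Fin 2 → ℝ),
      Γ' ≤ Submodule.span ℤ ({![(1 : ℝ), 0], ![a, b]} : Set (Fin 2 → ℝ)) ∧
      IsRectangular Γ' ∧
      (idx Γ' (Submodule.span ℤ ({![(1 : ℝ), 0], ![a, b]} : Set (Fin 2 → ℝ))) : ℝ) =
        |b| * (v : ℝ) * (w : ℝ) * (t ^ 2 + 1) / |t| :=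
  stmt11_general a b t hb ht u q v w hv hw huv hqw
end

section
/- Let a ∈ ℝ, b > 0, and suppose t₁, t₂ are nonzero reals with t₁ ≠ t₂ and t₁t₂ ≠ −1, such that a − bt₁, a + b/t₁, a − bt₂, a + b/t₂ are all rational. Then a ∈ ℚ, t₁², t₂² ∈ ℚ, and b² ∈ ℚ. -/
/-!
Subtracting the two values `a - b tᵢ` gives `b (t₁ - t₂)`, and subtracting the two values
`a + b / tᵢ` gives `b (t₁ - t₂) / (t₁ t₂)`; their quotient shows that `t₁ t₂` is rational. Adding
the differences `(a + b / tᵢ) - (a - b tᵢ)` gives `b (t₁ + t₂) (t₁ t₂ + 1) / (t₁ t₂)`, so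
`b (t₁ + t₂)` is rational as soon as `t₁ t₂ ≠ -1`. Hence `b tᵢ`, then `a` and `b / tᵢ` are rational,
and so are `tᵢ² = b tᵢ / (b / tᵢ)` and `b² = b tᵢ · (b / tᵢ)`.
-/

namespace Subfield

variable {K : Type*} [Field K] (F : Subfield K) {a b t t₁ t₂ : K}

theorem mul_sub_mem_of_sub_mul_mem (h₁ : a - b * t₁ ∈ F) (h₂ : a - b * t₂ ∈ F) :
    b * (t₁ - t₂) ∈ F := by
  convert F.sub_mem h₂ h₁ using 1
  ring

theorem mul_mem_of_sub_mul_mem_of_add_div_mem (hb : b ≠ 0) (ht₁ : t₁ ≠ 0) (ht₂ : t₂ ≠ 0)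
    (hne : t₁ ≠ t₂) (h₁ : a - b * t₁ ∈ F) (h₂ : a + b / t₁ ∈ F) (h₃ : a - b * t₂ ∈ F)
    (h₄ : a + b / t₂ ∈ F) : t₁ * t₂ ∈ F := by
  have hd : t₁ - t₂ ≠ 0 := sub_ne_zero.mpr hne
  have hq : (a + b / t₂) - (a + b / t₁) = b * (t₁ - t₂) / (t₁ * t₂) := by
    field_simp
    ring
  convert F.div_mem (F.mul_sub_mem_of_sub_mul_mem h₁ h₃) (F.sub_mem h₄ h₂) using 1
  rw [hq]
  field_simp

theorem mul_add_mem_of_sub_mul_mem_of_add_div_mem (hb : b ≠ 0) (ht₁ : t₁ ≠ 0) (ht₂ : t₂ ≠ 0)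
    (hne : t₁ ≠ t₂) (hprod : t₁ * t₂ ≠ -1) (h₁ : a - b * t₁ ∈ F) (h₂ : a + b / t₁ ∈ F)
    (h₃ : a - b * t₂ ∈ F) (h₄ : a + b / t₂ ∈ F) : b * (t₁ + t₂) ∈ F := by
  have hprod' : t₁ * t₂ + 1 ≠ 0 := fun h ↦ hprod (eq_neg_of_add_eq_zero_left h)
  have hsum := F.add_mem (F.sub_mem h₂ h₁) (F.sub_mem h₄ h₃)
  have hp := F.mul_mem_of_sub_mul_mem_of_add_div_mem hb ht₁ ht₂ hne h₁ h₂ h₃ h₄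
  convert F.div_mem (F.mul_mem hsum hp) (F.add_mem hp F.one_mem) using 1
  field_simp
  ring

theorem mul_mem_of_mul_add_mem_of_mul_sub_mem [NeZero (2 : K)] (hadd : b * (t₁ + t₂) ∈ F)
    (hsub : b * (t₁ - t₂) ∈ F) : b * t₁ ∈ F := by
  convert F.div_mem (F.add_mem hadd hsub) (ofNat_mem F 2) using 1
  field_simp
  ring

theorem sq_mem_of_mul_mem_of_div_mem (hb : b ≠ 0) (ht : t ≠ 0) (hmul : b * t ∈ F)
    (hdiv : b / t ∈ F) : t ^ 2 ∈ F ∧ b ^ 2 ∈ F := by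
  constructor
  · convert F.div_mem hmul hdiv using 1
    field_simp
  · convert F.mul_mem hmul hdiv using 1
    field_simp

theorem mem_and_sq_mem_of_sub_mul_mem_of_add_div_mem [NeZero (2 : K)] (hb : b ≠ 0)
    (ht₁ : t₁ ≠ 0) (ht₂ : t₂ ≠ 0) (hne : t₁ ≠ t₂) (hprod : t₁ * t₂ ≠ -1) (h₁ : a - b * t₁ ∈ F)
    (h₂ : a + b / t₁ ∈ F) (h₃ : a - b * t₂ ∈ F) (h₄ : a + b / t₂ ∈ F) :
    a ∈ F ∧ t₁ ^ 2 ∈ F ∧ t₂ ^ 2 ∈ F ∧ b ^ 2 ∈ F := by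
  have hadd := F.mul_add_mem_of_sub_mul_mem_of_add_div_mem hb ht₁ ht₂ hne hprod h₁ h₂ h₃ h₄
  have hbt₁ : b * t₁ ∈ F :=
    F.mul_mem_of_mul_add_mem_of_mul_sub_mem hadd (F.mul_sub_mem_of_sub_mul_mem h₁ h₃)
  have hbt₂ : b * t₂ ∈ F :=
    F.mul_mem_of_mul_add_mem_of_mul_sub_mem (add_comm t₁ t₂ ▸ hadd)
      (F.mul_sub_mem_of_sub_mul_mem h₃ h₁)
  have ha : a ∈ F := by simpa using F.add_mem h₁ hbt₁
  have hdiv₁ : b / t₁ ∈ F := by simpa using F.sub_mem h₂ ha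
  have hdiv₂ : b / t₂ ∈ F := by simpa using F.sub_mem h₄ ha
  exact ⟨ha, (F.sq_mem_of_mul_mem_of_div_mem hb ht₁ hbt₁ hdiv₁).1,
    (F.sq_mem_of_mul_mem_of_div_mem hb ht₂ hbt₂ hdiv₂).1,
    (F.sq_mem_of_mul_mem_of_div_mem hb ht₁ hbt₁ hdiv₁).2⟩

end Subfield

theorem Rat.mem_castHom_fieldRange_iff {K : Type*} [Field K] [CharZero K] {x : K} :
    x ∈ (Rat.castHom K).fieldRange ↔ ∃ r : ℚ, x = r := by
  simp [eq_comm]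

theorem stmt12 (a b t₁ t₂ : ℝ) (hb : 0 < b)
    (ht₁ : t₁ ≠ 0) (ht₂ : t₂ ≠ 0) (hne : t₁ ≠ t₂) (hprod : t₁ * t₂ ≠ -1)
    (h1 : ∃ r : ℚ, a - b * t₁ = (r : ℝ)) (h2 : ∃ r : ℚ, a + b / t₁ = (r : ℝ))
    (h3 : ∃ r : ℚ, a - b * t₂ = (r : ℝ)) (h4 : ∃ r : ℚ, a + b / t₂ = (r : ℝ)) :
    (∃ r : ℚ, a = (r : ℝ)) ∧ (∃ r : ℚ, t₁ ^ 2 = (r : ℝ)) ∧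
      (∃ r : ℚ, t₂ ^ 2 = (r : ℝ)) ∧ (∃ r : ℚ, b ^ 2 = (r : ℝ)) := by
  simp only [← Rat.mem_castHom_fieldRange_iff] at h1 h2 h3 h4 ⊢
  exact (Rat.castHom ℝ).fieldRange.mem_and_sq_mem_of_sub_mul_mem_of_add_div_mem hb.ne' ht₁ ht₂
    hne hprod h1 h2 h3 h4
end

section
/- Let τ = a + bi with b > 0, and suppose the lattice Γ_τ = span_ℤ{(1,0),(a,b)} ⊂ ℝ² contains two nonzero orthogonal vectors of the form A·(a,b) + B·(1,0) and C·(a,b) + D·(1,0) with A,B,C,D ∈ ℤ and AD − BC ≠ 0. Then (a²+b²)·AC + a·(AD+BC) + B·D = 0; consequently either a is rational (when AC = 0), or the point (a,b) lies on the circle centered at (−(AD+BC)/(2AC), 0) of radius |AD−BC|/(2|AC|), i.e. on a semicircle orthogonal to the real axis with rational center and rational radius, meeting the real line at two rational points. -/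
/-!
Expanding the inner product of `A τ + B` and `C τ + D` (as vectors of `ℝ²`) gives the quadratic
relation `|τ|² AC + a (AD + BC) + BD = 0`. If `AC = 0` the relation is linear in `a`, and its
coefficient `AD + BC` is `± (AD - BC) ≠ 0`, so `a` is rational. Otherwise dividing by `AC` and
completing the square gives a circle centred on the real axis whose squared radius is
`((AD + BC)² - 4 AC BD) / (4 (AC)²) = (AD - BC)² / (4 (AC)²)`.
-/

theorem quadratic_of_orthogonal {R : Type*} [CommRing R] {a b A B C D : R}
    (h : (A * a + B) * (C * a + D) + (A * b) * (C * b) = 0) :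
    (a ^ 2 + b ^ 2) * (A * C) + a * (A * D + B * C) + B * D = 0 := by
  linear_combination h

theorem sq_add_eq_sq_sub_of_mul_eq_zero {R : Type*} [CommRing R] {A B C D : R}
    (h : A * C = 0) : (A * D + B * C) ^ 2 = (A * D - B * C) ^ 2 := by
  linear_combination 4 * B * D * h

theorem add_div_two_mul_sq_add_sq_eq {K : Type*} [Field K] [NeZero (2 : K)] {p s t x y : K}
    (hp : p ≠ 0) (h : (x ^ 2 + y ^ 2) * p + x * s + t = 0) :
    (x + s / (2 * p)) ^ 2 + y ^ 2 = (s ^ 2 - 4 * p * t) / (4 * p ^ 2) := by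
  have h4 : (4 : K) ≠ 0 := by
    rw [show (4 : K) = 2 * 2 by norm_num]
    exact mul_ne_zero two_ne_zero two_ne_zero
  field_simp
  linear_combination 16 * p * h

theorem stmt14_general (a b : ℝ) (A B C D : ℤ)
    (hdet : A * D - B * C ≠ 0)
    (horth : ((A : ℝ) * a + (B : ℝ)) * ((C : ℝ) * a + (D : ℝ)) +
      ((A : ℝ) * b) * ((C : ℝ) * b) = 0) :
    ((a ^ 2 + b ^ 2) * ((A : ℝ) * (C : ℝ)) +
        a * ((A : ℝ) * (D : ℝ) + (B : ℝ) * (C : ℝ)) + (B : ℝ) * (D : ℝ) = 0) ∧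
    (A * C = 0 → ∃ r : ℚ, a = (r : ℝ)) ∧
    (A * C ≠ 0 →
      (a + ((A : ℝ) * (D : ℝ) + (B : ℝ) * (C : ℝ)) / (2 * (A : ℝ) * (C : ℝ))) ^ 2 +
          b ^ 2 =
        ((A : ℝ) * (D : ℝ) - (B : ℝ) * (C : ℝ)) ^ 2 / (4 * ((A : ℝ) * (C : ℝ)) ^ 2)) := by
  have hquad := quadratic_of_orthogonal horth
  refine ⟨hquad, fun hAC => ?_, fun hAC => ?_⟩
  · have hs : A * D + B * C ≠ 0 := by
      rw [← pow_ne_zero_iff two_ne_zero, sq_add_eq_sq_sub_of_mul_eq_zero hAC]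
      exact pow_ne_zero 2 hdet
    have hACr : (A : ℝ) * C = 0 := by exact_mod_cast hAC
    have hsr : (A : ℝ) * D + B * C ≠ 0 := by exact_mod_cast hs
    refine ⟨-(B * D) / (A * D + B * C), ?_⟩
    push_cast
    rw [eq_div_iff hsr]
    linear_combination hquad - (a ^ 2 + b ^ 2) * hACr
  · have hp : (A : ℝ) * C ≠ 0 := by exact_mod_cast hAC
    rw [mul_assoc, add_div_two_mul_sq_add_sq_eq hp hquad]
    ring

theorem stmt14 (a b : ℝ) (hb : 0 < b) (A B C D : ℤ)
    (hdet : A * D - B * C ≠ 0)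
    (horth : ((A : ℝ) * a + (B : ℝ)) * ((C : ℝ) * a + (D : ℝ)) +
      ((A : ℝ) * b) * ((C : ℝ) * b) = 0) :
    ((a ^ 2 + b ^ 2) * ((A : ℝ) * (C : ℝ)) +
        a * ((A : ℝ) * (D : ℝ) + (B : ℝ) * (C : ℝ)) + (B : ℝ) * (D : ℝ) = 0) ∧
    (A * C = 0 → ∃ r : ℚ, a = (r : ℝ)) ∧
    (A * C ≠ 0 →
      (a + ((A : ℝ) * (D : ℝ) + (B : ℝ) * (C : ℝ)) / (2 * (A : ℝ) * (C : ℝ))) ^ 2 +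
          b ^ 2 =
        ((A : ℝ) * (D : ℝ) - (B : ℝ) * (C : ℝ)) ^ 2 / (4 * ((A : ℝ) * (C : ℝ)) ^ 2)) :=
  stmt14_general a b A B C D hdet horth
end

section
/- Let τ = a + bi with b > 0, and suppose (a,b) lies on the semicircle with endpoints α, β ∈ ℚ on the real axis (α ≠ β), i.e. (a − (α+β)/2)² + b² = ((α−β)/2)². Then there exists σ ∈ SL₂(ℤ) acting by Möbius transformation on the upper half-plane such that σ(τ) = a' + b'i with a' ∈ ℚ; consequently the lattice Γ_τ = span_ℤ{(1,0),(a,b)} is virtually rectangular. -/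
lemma mobius (a b : ℝ) (hb : 0 < b) (p q u v : ℤ) (α β : ℚ)
    (hv : 0 < (v:ℝ)) (hu : (u:ℝ) = (β:ℝ) * v) (hdet : (p:ℝ) * (-(u:ℝ)) - q * v = 1)
    (hkey : (a - α) * (a - β) + b ^ 2 = 0) (hαβ : (α:ℝ) ≠ β) :
    ∃ a' b' : ℝ, 0 < b' ∧ (∃ r : ℚ, a' = (r:ℝ)) ∧
      ((p:ℂ) * ((a:ℂ) + (b:ℂ) * Complex.I) + (q:ℂ)) /
          ((v:ℂ) * ((a:ℂ) + (b:ℂ) * Complex.I) + ((-u : ℤ):ℂ)) =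
        (a' : ℂ) + (b' : ℂ) * Complex.I := by
  have hvab : (α:ℝ) - β ≠ 0 := sub_ne_zero.mpr hαβ
  set N : ℝ := ((v:ℝ) * a - u) ^ 2 + ((v:ℝ) * b) ^ 2 with hN
  have hvb : 0 < (v:ℝ) * b := by positivity
  have hNpos : 0 < N := by nlinarith [sq_nonneg ((v:ℝ) * a - u)]
  have haβ : a - (β:ℝ) ≠ 0 := by
    intro h
    have hb2 : b ^ 2 = 0 := by linear_combination hkey - (a - (α:ℝ)) * h
    nlinarith
  have hN2 : N = (v:ℝ)^2 * (a - β) * ((α:ℝ) - β) := by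
    rw [hN]; linear_combination ((v:ℝ))^2 * hkey - (2*(v:ℝ)*a - u - (β:ℝ)*v) * hu
  have hdet2 : (v:ℝ) * ((p:ℝ)*β + q) = -1 := by linear_combination -hdet - (p:ℝ)*hu
  set A : ℝ := ((p:ℝ)*α + q) / ((v:ℝ)*((α:ℝ) - β)) with hA
  set B : ℝ := b / N with hB
  have hRe : A * ((v:ℝ)*a - u) - B*((v:ℝ)*b) = (p:ℝ)*a + q := by
    rw [hA, hB, hN2, hu]
    field_simp
    linear_combination ((a-(α:ℝ))*(a-(β:ℝ))) * hdet2 - hkey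
  have hIm : A * ((v:ℝ)*b) + B*((v:ℝ)*a - u) = (p:ℝ)*b := by
    rw [hA, hB, hN2, hu]
    field_simp
    linear_combination hdet2
  have hD : ((v:ℂ) * ((a:ℂ) + (b:ℂ) * Complex.I) + ((-u : ℤ):ℂ)) ≠ 0 := by
    intro h
    have h2 := congrArg Complex.im h
    simp [Complex.add_im, Complex.mul_im] at h2
    rcases h2 with h2 | h2
    · exact absurd h2 (by exact_mod_cast hv.ne')
    · exact absurd h2 hb.ne'
  refine ⟨A, B, by rw [hB]; positivity, ⟨(p*α + q) / (v*(α - β)), by rw [hA]; push_cast; ring⟩, ?_⟩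
  rw [div_eq_iff hD]
  apply Complex.ext <;>
    simp only [Complex.add_re, Complex.add_im, Complex.mul_re, Complex.mul_im,
      Complex.ofReal_re, Complex.ofReal_im, Complex.I_re, Complex.I_im,
      Complex.intCast_re, Complex.intCast_im, Int.cast_neg, Complex.neg_re, Complex.neg_im]
  · linear_combination hRe.symm
  · linear_combination hIm.symm

lemma latt (a b : ℝ) (hb : 0 < b) (α β : ℚ) (hαβ : α ≠ β)
    (hkey : (a - (α:ℝ)) * (a - (β:ℝ)) + b ^ 2 = 0) :
    VirtuallyRectangular
      (Submodule.span ℤ ({![(1 : ℝ), 0], ![a, b]} : Set (Fin 2 → ℝ))) := by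
  set e1 : Fin 2 → ℝ := ![(1:ℝ), 0] with he1
  set t : Fin 2 → ℝ := ![a, b] with ht
  set L : Submodule ℤ (Fin 2 → ℝ) := Submodule.span ℤ {e1, t} with hL
  set c : ℤ := α.num with hcdef
  set d : ℤ := (α.den : ℤ) with hddef
  set u : ℤ := β.num with hudef
  set v : ℤ := (β.den : ℤ) with hvdef
  have hd : (0:ℝ) < d := by rw [hddef]; exact_mod_cast α.pos
  have hv : (0:ℝ) < v := by rw [hvdef]; exact_mod_cast β.pos
  have hcq : (c:ℚ) = α * d := by
    rw [hcdef, hddef]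
    push_cast
    rw [← Rat.num_div_den α, Rat.num_div_den α]
    field_simp
    exact (Rat.mul_den_eq_num _).symm
  have huq : (u:ℚ) = β * v := by
    rw [hudef, hvdef]
    push_cast
    rw [← Rat.num_div_den β, Rat.num_div_den β]
    field_simp
    exact (Rat.mul_den_eq_num _).symm
  have hc : (c:ℝ) = (α:ℝ) * d := by exact_mod_cast congrArg (Rat.cast : ℚ → ℝ) hcq
  have hu : (u:ℝ) = (β:ℝ) * v := by exact_mod_cast congrArg (Rat.cast : ℚ → ℝ) huq
  set w1 : Fin 2 → ℝ := ![(d:ℝ)*a - c, (d:ℝ)*b] with hw1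
  set w2 : Fin 2 → ℝ := ![(v:ℝ)*a - u, (v:ℝ)*b] with hw2
  set bb : Fin 2 → Fin 2 → ℝ := ![w1, w2] with hbb
  set M : Submodule ℤ (Fin 2 → ℝ) := Submodule.span ℤ (Set.range bb) with hM
  have hw1t : w1 = d • t - c • e1 := by
    funext i
    fin_cases i <;> simp [hw1, ht, he1] <;> ring
  have hw2t : w2 = v • t - u • e1 := by
    funext i
    fin_cases i <;> simp [hw2, ht, he1] <;> ring
  have he1L : e1 ∈ L := Submodule.subset_span (Set.mem_insert _ _)
  have htL : t ∈ L := Submodule.subset_span (Set.mem_insert_of_mem _ rfl)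
  have hML : M ≤ L := by
    rw [hM, Submodule.span_le]
    rintro x ⟨i, rfl⟩
    fin_cases i
    · show w1 ∈ L
      rw [hw1t]; exact sub_mem (L.smul_mem _ htL) (L.smul_mem _ he1L)
    · show w2 ∈ L
      rw [hw2t]; exact sub_mem (L.smul_mem _ htL) (L.smul_mem _ he1L)
  have hdvne : (α:ℝ) ≠ (β:ℝ) := fun h => hαβ (by exact_mod_cast h)
  have hrect : IsRectangular M := by
    refine ⟨bb, ?_, ?_, hM⟩
    · rw [hbb, linearIndependent_fin2]
      constructor
      · intro h
        have h1 := congrFun h 1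
        simp [hw2] at h1
        rcases h1 with h1 | h1
        · exact absurd (by exact_mod_cast h1 : (v:ℝ) = 0) hv.ne'
        · exact hb.ne' h1
      · intro s h
        have h1 := congrFun h 1
        have h0 := congrFun h 0
        simp [hw1, hw2] at h1 h0
        have hsv : s * (v:ℝ) = d := by
          have := mul_right_cancel₀ hb.ne' (by linarith [h1] : s * (v:ℝ) * b = (d:ℝ) * b)
          exact this
        have hducv : (d:ℝ) * u = (c:ℝ) * v := by
          have h0v : s * ((v:ℝ)*a - u) * v = ((d:ℝ)*a - c) * v := by rw [h0]
          linear_combination ((v:ℝ)*a - (u:ℝ)) * hsv - h0v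
        apply hdvne
        have : (α:ℝ) * ((d:ℝ) * v) = (β:ℝ) * ((d:ℝ) * v) := by
          linear_combination (d:ℝ)*hu - (v:ℝ)*hc - hducv
        exact mul_right_cancel₀ (by positivity) this
    · intro i j hij
      have horth : ((d:ℝ)*a - c) * ((v:ℝ)*a - u) + (d:ℝ)*b * ((v:ℝ)*b) = 0 := by
        linear_combination ((d:ℝ)*(v:ℝ))*hkey - ((d:ℝ)*a - (c:ℝ))*hu - ((v:ℝ)*a - (β:ℝ)*(v:ℝ))*hc
      fin_cases i <;> fin_cases j <;> simp [Fin.sum_univ_two, hbb, hw1, hw2] at hij ⊢ <;>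
        linear_combination horth
  -- the index
  set Δ : ℤ := d*u - c*v with hΔdef
  have hΔ : Δ ≠ 0 := by
    intro h
    apply hdvne
    have hducv : (d:ℝ) * u = (c:ℝ) * v := by
      have : ((d*u : ℤ):ℝ) = ((c*v : ℤ):ℝ) := by exact_mod_cast congrArg (Int.cast : ℤ → ℝ) (by linarith [h] : d*u = c*v)
      push_cast at this; exact this
    have : (α:ℝ) * ((d:ℝ) * v) = (β:ℝ) * ((d:ℝ) * v) := by
      linear_combination (d:ℝ)*hu - (v:ℝ)*hc - hducv
    exact mul_right_cancel₀ (by positivity) this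
  have hw1M : w1 ∈ M := Submodule.subset_span ⟨0, rfl⟩
  have hw2M : w2 ∈ M := Submodule.subset_span ⟨1, rfl⟩
  have hΔe1 : Δ • e1 = v • w1 - d • w2 := by
    funext i
    fin_cases i <;>
      simp [he1, hw1, hw2, hΔdef] <;> push_cast <;> ring
  have hΔt : Δ • t = u • w1 - c • w2 := by
    funext i
    fin_cases i <;>
      simp [ht, hw1, hw2, hΔdef] <;> push_cast <;> ring
  have hsmul : ∀ x ∈ L, Δ • x ∈ M := by
    intro x hx
    rw [hL] at hx
    induction hx using Submodule.span_induction with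
    | mem y hy =>
      rcases hy with hy | hy
      · rw [hy, hΔe1]; exact sub_mem (M.smul_mem _ hw1M) (M.smul_mem _ hw2M)
      · rw [hy, hΔt]; exact sub_mem (M.smul_mem _ hw1M) (M.smul_mem _ hw2M)
    | zero => simp
    | add x y hx hy ihx ihy => rw [smul_add]; exact add_mem ihx ihy
    | smul r x hx ih => rw [smul_comm]; exact M.smul_mem _ ih
  have hidx : idx M L ≠ 0 := by
    show AddSubgroup.relIndex M.toAddSubgroup L.toAddSubgroup ≠ 0
    rw [AddSubgroup.relIndex]
    haveI : AddGroup.FG L.toAddSubgroup := by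
      rw [AddGroup.fg_iff_addSubgroup_fg]
      exact (Submodule.fg_iff_addSubgroup_fg L).mp
        (Submodule.fg_span (Set.toFinite _))
    haveI : Finite (↥L.toAddSubgroup ⧸ M.toAddSubgroup.addSubgroupOf L.toAddSubgroup) := by
      apply AddCommGroup.finite_of_fg_torsion
      intro x
      induction x using QuotientAddGroup.induction_on with
      | H y =>
        rw [isOfFinAddOrder_iff_nsmul_eq_zero]
        refine ⟨Δ.natAbs, Int.natAbs_pos.mpr hΔ, ?_⟩
        have h5 : ((Δ.natAbs • y : L.toAddSubgroup) : Fin 2 → ℝ) ∈ M := by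
          have h6 : ((Δ.natAbs • y : L.toAddSubgroup) : Fin 2 → ℝ)
              = (Δ.natAbs : ℤ) • (y : Fin 2 → ℝ) := by
            rw [natCast_zsmul]
            simp
          rw [h6]
          rcases Int.natAbs_eq Δ with h | h
          · rw [← h]; exact hsmul _ y.2
          · rw [show ((Δ.natAbs:ℤ)) = -Δ by omega, neg_smul]
            exact neg_mem (hsmul _ y.2)
        have h4 : Δ.natAbs • y ∈ M.toAddSubgroup.addSubgroupOf L.toAddSubgroup :=
          AddSubgroup.mem_addSubgroupOf.mpr h5
        exact ((QuotientAddGroup.mk' _).map_nsmul Δ.natAbs y).symm.trans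
          ((QuotientAddGroup.eq_zero_iff _).mpr h4)
    exact AddSubgroup.index_ne_zero_of_finite
  exact ⟨M, hML, hrect, hidx⟩

theorem stmt15 (a b : ℝ) (hb : 0 < b) (α β : ℚ) (hαβ : α ≠ β)
    (hcirc : (a - ((α : ℝ) + (β : ℝ)) / 2) ^ 2 + b ^ 2 = (((α : ℝ) - (β : ℝ)) / 2) ^ 2) :
    (∃ σ : Matrix (Fin 2) (Fin 2) ℤ, σ.det = 1 ∧
      ∃ a' b' : ℝ, 0 < b' ∧ (∃ r : ℚ, a' = (r : ℝ)) ∧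
        ((σ 0 0 : ℂ) * ((a : ℂ) + (b : ℂ) * Complex.I) + (σ 0 1 : ℂ)) /
            ((σ 1 0 : ℂ) * ((a : ℂ) + (b : ℂ) * Complex.I) + (σ 1 1 : ℂ)) =
          (a' : ℂ) + (b' : ℂ) * Complex.I) ∧
    VirtuallyRectangular
      (Submodule.span ℤ ({![(1 : ℝ), 0], ![a, b]} : Set (Fin 2 → ℝ))) := by
  have hkey : (a - (α:ℝ)) * (a - (β:ℝ)) + b ^ 2 = 0 := by linear_combination hcirc
  constructor
  · -- the Möbius transformation part
    set u : ℤ := β.num with hudef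
    set v : ℤ := (β.den : ℤ) with hvdef
    have hv : (0:ℝ) < v := by rw [hvdef]; exact_mod_cast β.pos
    have huq : (u:ℚ) = β * v := by
      rw [hudef, hvdef]
      push_cast
      rw [← Rat.num_div_den β, Rat.num_div_den β]
      field_simp
      exact (Rat.mul_den_eq_num _).symm
    have hu : (u:ℝ) = (β:ℝ) * v := by exact_mod_cast congrArg (Rat.cast : ℚ → ℝ) huq
    have hgcd : Int.gcd u v = 1 := β.reduced
    set p : ℤ := -(Int.gcdA u v) with hpdef
    set q : ℤ := -(Int.gcdB u v) with hqdef
    have hdetZ : p * (-u) - q * v = 1 := by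
      have := Int.gcd_eq_gcd_ab u v
      rw [hgcd] at this
      rw [hpdef, hqdef]
      push_cast at this
      linear_combination -this
    have hdetR : (p:ℝ) * (-(u:ℝ)) - (q:ℝ) * v = 1 := by exact_mod_cast hdetZ
    have hαβR : (α:ℝ) ≠ (β:ℝ) := fun h => hαβ (by exact_mod_cast h)
    obtain ⟨a', b', hb', hr, heq⟩ := mobius a b hb p q u v α β hv hu hdetR hkey hαβR
    refine ⟨!![p, q; v, -u], ?_, a', b', hb', hr, heq⟩
    rw [Matrix.det_fin_two_of]
    linarith [hdetZ]
  · exact latt a b hb α β hαβ hkey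
end
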